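/- arXiv:2509.08798 — 3 statements merged into one kernel-verified Lean document; each statement's English description precedes it below -/
import Mathlib

section
/- Let G = (V, E) be a finite simple graph and let A, B ⊆ V be independent offensive alliances such that B is obtained from A by one token jumping step, with u the unique vertex of A ∖ B and v the unique vertex of B ∖ A. If u and v are not adjacent in G, then A ∪ {v} is an independent offensive alliance. -/
open Finset

variable {V : Type*}

section Defs

variable [Fintype V] [DecidableEq V] (G : SimpleGraph V) [DecidableRel G.Adj]

/-- `NbrsIn G A v` is the number of neighbors of `v` lying in `A` (denoted `d_A(v)`). -/
def NbrsIn (A : Finset V) (v : V) : ℕ := (A.filter (fun u => G.Adj v u)).card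

/-- The boundary `∂A = N(A) ∖ A`: vertices outside `A` with a neighbor in `A`. -/
def Bdry (A : Finset V) : Finset V :=
  Finset.univ.filter (fun v => v ∉ A ∧ ∃ u ∈ A, G.Adj v u)

/-- `A` is a defensive alliance: `d_A(v) + 1 ≥ d_{V∖A}(v)` for every `v ∈ A`. -/
def DefAll (A : Finset V) : Prop := ∀ v ∈ A, NbrsIn G A v + 1 ≥ NbrsIn G Aᶜ v

/-- `A` is an offensive alliance: `d_A(v) ≥ d_{V∖A}(v) + 1` for every `v ∈ ∂A`. -/
def OffAll (A : Finset V) : Prop := ∀ v ∈ Bdry G A, NbrsIn G A v ≥ NbrsIn G Aᶜ v + 1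

/-- `A` is a powerful alliance: both a defensive and an offensive alliance. -/
def PowAll (A : Finset V) : Prop := DefAll G A ∧ OffAll G A

/-- `A` is a dominating set: every vertex is in `A` or has a neighbor in `A`. -/
def DomSet (A : Finset V) : Prop := ∀ v : V, v ∈ A ∨ ∃ u ∈ A, G.Adj v u

/-- `A` is an independent set. -/
def IndSet (A : Finset V) : Prop := ∀ u ∈ A, ∀ w ∈ A, ¬ G.Adj u w

/-- The set of leaves (vertices of degree one) of `G`. -/
def Leaves : Finset V := Finset.univ.filter (fun v => G.degree v = 1)

/-- `Z(X) = {v ∈ V ∖ N[X] : N(v) ⊆ L ∪ ∂X}`. -/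
def ZSet (X : Finset V) : Finset V :=
  Finset.univ.filter (fun v => v ∉ X ∧ (∀ u ∈ X, ¬ G.Adj v u) ∧
    G.neighborFinset v ⊆ Leaves G ∪ Bdry G X)

/-- `Y(X) = N[X] ∪ Z(X) ∪ L`. -/
def YSet (X : Finset V) : Finset V := (X ∪ Bdry G X) ∪ ZSet G X ∪ Leaves G

/-- Global independent offensive alliance: offensive alliance that is dominating and independent. -/
def GIOA (A : Finset V) : Prop := OffAll G A ∧ DomSet G A ∧ IndSet G A

end Defs

/-- The induced subgraph `G^{≤r}` on vertices of degree at most `r` (modelled as a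
graph on all of `V` whose edges are the edges of `G` with both endpoints of degree `≤ r`). -/
def GLE [Fintype V] (G : SimpleGraph V) [DecidableRel G.Adj] (r : ℕ) : SimpleGraph V where
  Adj u w := G.Adj u w ∧ G.degree u ≤ r ∧ G.degree w ≤ r
  symm := ⟨fun u w h => ⟨h.1.symm, h.2.2, h.2.1⟩⟩
  loopless := ⟨fun u h => G.loopless.irrefl u h.1⟩

section Steps

variable [DecidableEq V]

/-- Token jumping step: `|A| = |B|` and `|A ∖ B| = 1`. -/
def TJStep (A B : Finset V) : Prop := A.card = B.card ∧ (A \ B).card = 1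

/-- Token addition step: `A ⊆ B` and `|B ∖ A| = 1`. -/
def TAStep (A B : Finset V) : Prop := A ⊆ B ∧ (B \ A).card = 1

/-- Token removal step: `B ⊆ A` and `|A ∖ B| = 1`. -/
def TRStep (A B : Finset V) : Prop := B ⊆ A ∧ (A \ B).card = 1

/-- Token addition/removal (TAR) step. -/
def TARStep (A B : Finset V) : Prop := TAStep A B ∨ TRStep A B

/-- `f 0, f 1, …, f (n-1)` is a reconfiguration sequence (with `n` members, i.e. of
length `n`) from `A` to `B` for step relation `step`, all of whose members satisfy `X`. -/
def SeqOn (step : Finset V → Finset V → Prop) (X : Finset V → Prop)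
    (f : ℕ → Finset V) (A B : Finset V) (n : ℕ) : Prop :=
  1 ≤ n ∧ f 0 = A ∧ f (n - 1) = B ∧
    (∀ i, i + 1 < n → step (f i) (f (i + 1))) ∧ (∀ i, i < n → X (f i))

/-- There is an `X`-`step` reconfiguration sequence of length `n` from `A` to `B`. -/
def IsSeq (step : Finset V → Finset V → Prop) (X : Finset V → Prop)
    (A B : Finset V) (n : ℕ) : Prop :=
  ∃ f : ℕ → Finset V, SeqOn step X f A B n

/-- `X` is reconfiguration monotone increasing (rmi). -/
def Rmi (X : Finset V → Prop) : Prop :=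
  ∀ A B : Finset V, X A → X B → TJStep A B → ∀ v ∈ B \ A, X (insert v A)

/-- `X` is reconfiguration monotone decreasing (rmd). -/
def Rmd (X : Finset V → Prop) : Prop :=
  ∀ A B : Finset V, X A → X B → TJStep A B → ∀ v ∈ A \ B, X (A.erase v)

end Steps

/-
Since `B ∖ A = {v}`, the set `A ∪ {v}` is `A ∪ B`. A vertex outside `A ∪ B` with a neighbour in
it lies on the boundary of `A` or of `B`, and that alliance already outnumbers the vertex's
neighbours outside; enlarging it to `A ∪ B` only helps. For independence, the only pair not
inside `A` or inside `B` is `{u, v}`.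
-/

section Alliances

variable {G : SimpleGraph V}

theorem nbrsIn_mono [DecidableRel G.Adj] {C D : Finset V} (h : D ⊆ C) (x : V) :
    NbrsIn G D x ≤ NbrsIn G C x :=
  card_le_card (filter_subset_filter _ h)

theorem mem_bdry [Fintype V] [DecidableEq V] [DecidableRel G.Adj] {A : Finset V} {x : V} :
    x ∈ Bdry G A ↔ x ∉ A ∧ ∃ u ∈ A, G.Adj x u := by
  simp only [Bdry, mem_filter, mem_univ, true_and]

variable [Fintype V] [DecidableEq V] [DecidableRel G.Adj]

theorem OffAll.ge_of_subset {C D : Finset V} (hD : OffAll G D) (hDC : D ⊆ C) {x : V}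
    (hx : x ∈ Bdry G D) : NbrsIn G C x ≥ NbrsIn G Cᶜ x + 1 :=
  calc NbrsIn G Cᶜ x + 1 ≤ NbrsIn G Dᶜ x + 1 :=
        Nat.add_le_add_right (nbrsIn_mono (compl_subset_compl.mpr hDC) x) 1
    _ ≤ NbrsIn G D x := hD x hx
    _ ≤ NbrsIn G C x := nbrsIn_mono hDC x

theorem OffAll.union {A B : Finset V} (hA : OffAll G A) (hB : OffAll G B) :
    OffAll G (A ∪ B) := by
  intro x hx
  obtain ⟨hxAB, w, hw, hxw⟩ := mem_bdry.mp hx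
  rw [mem_union, not_or] at hxAB
  rcases mem_union.mp hw with hwA | hwB
  · exact hA.ge_of_subset subset_union_left (mem_bdry.mpr ⟨hxAB.1, w, hwA, hxw⟩)
  · exact hB.ge_of_subset subset_union_right (mem_bdry.mpr ⟨hxAB.2, w, hwB, hxw⟩)

end Alliances

theorem IndSet.union {G : SimpleGraph V} [DecidableEq V] {A B : Finset V} (hA : IndSet G A)
    (hB : IndSet G B) (hAB : ∀ a ∈ A \ B, ∀ b ∈ B \ A, ¬ G.Adj a b) : IndSet G (A ∪ B) := by
  have cross : ∀ a ∈ A, ∀ b ∈ B, b ∉ A → ¬ G.Adj a b := fun a ha b hb hbA => by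
    by_cases haB : a ∈ B
    · exact hB a haB b hb
    · exact hAB a (mem_sdiff.mpr ⟨ha, haB⟩) b (mem_sdiff.mpr ⟨hb, hbA⟩)
  intro a ha b hb
  by_cases haA : a ∈ A <;> by_cases hbA : b ∈ A
  · exact hA a haA b hbA
  · exact cross a haA b ((mem_union.mp hb).resolve_left hbA) hbA
  · exact fun h => cross b hbA a ((mem_union.mp ha).resolve_left haA) haA h.symm
  · exact hB a ((mem_union.mp ha).resolve_left haA) b ((mem_union.mp hb).resolve_left hbA)

theorem stmt_9_general {V : Type*} [Fintype V] [DecidableEq V]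
    (G : SimpleGraph V) [DecidableRel G.Adj] (A B : Finset V)
    (hAoff : OffAll G A) (hAind : IndSet G A)
    (hBoff : OffAll G B) (hBind : IndSet G B)
    (u v : V) (hu : A \ B = {u}) (hv : B \ A = {v}) (hnadj : ¬ G.Adj u v) :
    OffAll G (insert v A) ∧ IndSet G (insert v A) := by
  have hunion : insert v A = A ∪ B := by
    rw [← union_sdiff_self_eq_union, hv, union_comm, insert_eq]
  rw [hunion]
  refine ⟨hAoff.union hBoff, hAind.union hBind ?_⟩
  simpa only [hu, hv, mem_singleton, forall_eq] using hnadj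

theorem stmt_9 {V : Type*} [Fintype V] [DecidableEq V]
    (G : SimpleGraph V) [DecidableRel G.Adj] (A B : Finset V)
    (hAoff : OffAll G A) (hAind : IndSet G A)
    (hBoff : OffAll G B) (hBind : IndSet G B)
    (hTJ : TJStep A B)
    (u v : V) (hu : A \ B = {u}) (hv : B \ A = {v}) (hnadj : ¬ G.Adj u v) :
    OffAll G (insert v A) ∧ IndSet G (insert v A) :=
  stmt_9_general G A B hAoff hAind hBoff hBind u v hu hv hnadj
end

section
/- Let G = (V, E) be a finite simple graph, let A ⊆ V be an offensive alliance, and let v, u be vertices of the same type, i.e., N(u) ∖ {v} = N(v) ∖ {u}. If v ∈ A and u ∉ A, then (A ∖ {v}) ∪ {u} is also an offensive alliance. -/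
/-! Swapping two vertices of the same type is an automorphism of the graph, and since `v ∈ A`, `u ∉ A`
it carries `A` onto `(A ∖ {v}) ∪ {u}`. Neighbour counts and boundaries are transported by graph
isomorphisms, so offensive alliances are too. -/

open Finset

variable {V : Type*}

theorem Finset.map_swap_of_mem_of_notMem {α : Type*} [DecidableEq α] {s : Finset α} {i j : α}
    (hi : i ∈ s) (hj : j ∉ s) : s.map (Equiv.swap i j).toEmbedding = insert j (s.erase i) := by
  ext x
  rw [Finset.mem_map_equiv, Equiv.symm_swap, Equiv.swap_apply_def]
  grind

namespace SimpleGraph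

section Iso

variable {W : Type*} {G : SimpleGraph V} {H : SimpleGraph W}

theorem Iso.nbrsIn_map [DecidableRel G.Adj] [DecidableRel H.Adj] (φ : G ≃g H) (A : Finset V)
    (w : V) : NbrsIn H (A.map φ.toEquiv.toEmbedding) (φ w) = NbrsIn G A w := by
  simp only [NbrsIn, Finset.filter_map, Finset.card_map]
  congr 2
  ext
  simp [φ.map_adj_iff]

variable [Fintype V] [Fintype W] [DecidableEq V] [DecidableEq W]

theorem Iso.mem_bdry_map_iff [DecidableRel G.Adj] [DecidableRel H.Adj] (φ : G ≃g H)
    (A : Finset V) (w : V) : φ w ∈ Bdry H (A.map φ.toEquiv.toEmbedding) ↔ w ∈ Bdry G A := by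
  simp [Bdry, Finset.mem_map, φ.map_adj_iff, -Finset.mem_map_equiv]

theorem Iso.compl_map (φ : G ≃g H) (A : Finset V) :
    (A.map φ.toEquiv.toEmbedding)ᶜ = Aᶜ.map φ.toEquiv.toEmbedding := by
  ext x
  obtain ⟨w, rfl⟩ := φ.surjective x
  simp

end Iso

def IsSameType (G : SimpleGraph V) (u v : V) : Prop :=
  ∀ ⦃w⦄, w ≠ u → w ≠ v → (G.Adj u w ↔ G.Adj v w)

variable {G : SimpleGraph V} {u v : V}

theorem isSameType_of_neighborFinset_sdiff_eq [Fintype V] [DecidableRel G.Adj] [DecidableEq V]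
    (h : G.neighborFinset u \ {v} = G.neighborFinset v \ {u}) : G.IsSameType u v := by
  intro w hwu hwv
  simpa [hwu, hwv] using Finset.ext_iff.mp h w

theorem IsSameType.symm (h : G.IsSameType u v) : G.IsSameType v u :=
  fun _ hwv hwu => (h hwu hwv).symm

theorem IsSameType.adj_swap_iff [DecidableEq V] (h : G.IsSameType u v) (a b : V) :
    G.Adj (Equiv.swap u v a) (Equiv.swap u v b) ↔ G.Adj a b := by
  rw [Equiv.swap_apply_def, Equiv.swap_apply_def]
  split_ifs <;> subst_vars <;> grind [IsSameType, G.adj_comm, G.irrefl]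

def IsSameType.swapIso [DecidableEq V] (h : G.IsSameType u v) : G ≃g G :=
  ⟨Equiv.swap u v, h.adj_swap_iff _ _⟩

end SimpleGraph

theorem OffAll.map {W : Type*} [Fintype V] [Fintype W] [DecidableEq V] [DecidableEq W]
    {G : SimpleGraph V} {H : SimpleGraph W} [DecidableRel G.Adj] [DecidableRel H.Adj]
    {A : Finset V} (hA : OffAll G A) (φ : G ≃g H) : OffAll H (A.map φ.toEquiv.toEmbedding) := by
  intro x hx
  obtain ⟨w, rfl⟩ := φ.surjective x
  rw [φ.mem_bdry_map_iff] at hx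
  rw [φ.compl_map, φ.nbrsIn_map, φ.nbrsIn_map]
  exact hA w hx

theorem stmt_14 {V : Type*} [Fintype V] [DecidableEq V]
    (G : SimpleGraph V) [DecidableRel G.Adj]
    (A : Finset V) (hA : OffAll G A) (v u : V)
    (htype : G.neighborFinset u \ {v} = G.neighborFinset v \ {u})
    (hv : v ∈ A) (hu : u ∉ A) :
    OffAll G (insert u (A.erase v)) := by
  rw [← Finset.map_swap_of_mem_of_notMem hv hu]
  exact hA.map (SimpleGraph.isSameType_of_neighborFinset_sdiff_eq htype).symm.swapIso
end

section
/- Let G = (V, E) be a finite simple graph and let A ⊆ V be a global offensive alliance with |A| ≤ k. Then every vertex v ∈ V with d_G(v) > 2k belongs to A. -/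
open Finset

variable {V : Type*}

section Alliance

variable {G : SimpleGraph V} [DecidableRel G.Adj]

theorem nbrsIn_add_nbrsIn_compl [Fintype V] [DecidableEq V] (A : Finset V) (v : V) :
    NbrsIn G A v + NbrsIn G Aᶜ v = G.degree v := by
  rw [NbrsIn, NbrsIn, ← card_union_of_disjoint
    (disjoint_filter_filter disjoint_compl_right), ← filter_union, union_compl,
    ← SimpleGraph.card_neighborFinset_eq_degree]
  congr 1
  ext u
  simp

theorem nbrsIn_le_card (A : Finset V) (v : V) : NbrsIn G A v ≤ A.card :=
  card_filter_le _ _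

theorem DomSet.mem_bdry [Fintype V] [DecidableEq V] {A : Finset V} (hA : DomSet G A)
    {v : V} (hv : v ∉ A) : v ∈ Bdry G A := by
  simpa [Bdry, hv] using hA v

theorem OffAll.degree_lt_two_mul_card [Fintype V] [DecidableEq V] {A : Finset V}
    (hA : OffAll G A) {v : V} (hv : v ∈ Bdry G A) : G.degree v < 2 * A.card := by
  have hsplit := nbrsIn_add_nbrsIn_compl (G := G) A v
  have hin := nbrsIn_le_card (G := G) A v
  have hoff := hA v hv
  omega

end Alliance

theorem stmt_17 {V : Type*} [Fintype V] [DecidableEq V]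
    (G : SimpleGraph V) [DecidableRel G.Adj]
    (A : Finset V) (hAoff : OffAll G A) (hAdom : DomSet G A)
    (k : ℕ) (hk : A.card ≤ k) :
    ∀ v : V, 2 * k < G.degree v → v ∈ A := by
  intro v hv
  by_contra hvA
  have := hAoff.degree_lt_two_mul_card (hAdom.mem_bdry hvA)
  omega
end
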